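/- arXiv:2010.05886 — 7 statements merged into one kernel-verified Lean document; each statement's English description precedes it below -/
import Mathlib

section
/- Linear optimal feedback law: for every z ∈ ℝⁿ, the unique minimizer of u ↦ J(z,u) is u*(z) = −Kz, where K := (R + DᵀPD)⁻¹DᵀPMA; that is, J(z, −Kz) ≤ J(z,u) for all u ∈ ℝᵐ, with equality only when u = −Kz. -/
/-!
Writing `w = M A z + D u` (because `M B = D`), the cost is a quadratic function of `u` with Hessian
`S = R + Dᵀ P D`, which is positive definite, and linear part `Dᵀ P M A z = S K z`. Completing the
square gives `J z u = J z (-K z) + ½ (u + K z)ᵀ S (u + K z)`.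
-/

open Matrix

variable {ι κ R : Type*} [Fintype ι] [Fintype κ]

theorem Matrix.IsSymm.dotProduct_mulVec_comm [CommSemiring R] {S : Matrix ι ι R} (hS : S.IsSymm)
    (x y : ι → R) : x ⬝ᵥ S *ᵥ y = y ⬝ᵥ S *ᵥ x := by
  rw [dotProduct_mulVec, ← mulVec_transpose, hS.eq, dotProduct_comm]

theorem Matrix.IsSymm.dotProduct_mulVec_add_add [CommSemiring R] {S : Matrix ι ι R}
    (hS : S.IsSymm) (x y : ι → R) :
    (x + y) ⬝ᵥ S *ᵥ (x + y) = x ⬝ᵥ S *ᵥ x + 2 * (x ⬝ᵥ S *ᵥ y) + y ⬝ᵥ S *ᵥ y := by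
  simp only [mulVec_add, dotProduct_add, add_dotProduct, hS.dotProduct_mulVec_comm y x]
  ring

theorem Matrix.IsSymm.dotProduct_mulVec_add_mulVec [CommSemiring R] {P : Matrix κ κ R}
    (hP : P.IsSymm) (a : κ → R) (D : Matrix κ ι R) (u : ι → R) :
    (a + D *ᵥ u) ⬝ᵥ P *ᵥ (a + D *ᵥ u) =
      a ⬝ᵥ P *ᵥ a + 2 * (u ⬝ᵥ (Dᵀ * P) *ᵥ a) + u ⬝ᵥ (Dᵀ * P * D) *ᵥ u := by
  have hDadj (w : κ → R) : (D *ᵥ u) ⬝ᵥ w = u ⬝ᵥ Dᵀ *ᵥ w := by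
    rw [dotProduct_comm, dotProduct_mulVec, ← mulVec_transpose, dotProduct_comm]
  rw [hP.dotProduct_mulVec_add_add, hP.dotProduct_mulVec_comm a (D *ᵥ u), hDadj, hDadj,
    mulVec_mulVec, mulVec_mulVec, mulVec_mulVec]

theorem Matrix.PosDef.neg_isUniqueMin_of_eq_quadratic {S : Matrix ι ι ℝ} (hS : S.PosDef)
    {f : (ι → ℝ) → ℝ} {c : ℝ} {v : ι → ℝ}
    (hf : ∀ x, f x = c + x ⬝ᵥ S *ᵥ v + 1 / 2 * (x ⬝ᵥ S *ᵥ x)) (u : ι → ℝ) :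
    f (-v) ≤ f u ∧ (f (-v) = f u → u = -v) := by
  have hsymm : S.IsSymm := isHermitian_iff_isSymm.mp hS.isHermitian
  have hsquare : f u = f (-v) + 1 / 2 * ((u + v) ⬝ᵥ S *ᵥ (u + v)) := by
    rw [hf, hf, hsymm.dotProduct_mulVec_add_add]
    simp only [neg_dotProduct, mulVec_neg, dotProduct_neg]
    ring
  refine ⟨?_, fun heq => ?_⟩
  · have := hS.posSemidef.dotProduct_mulVec_nonneg (u + v)
    simp only [star_trivial] at this
    linarith
  · by_contra hne
    have := hS.dotProduct_mulVec_pos (x := u + v) fun h => hne (eq_neg_of_add_eq_zero_left h)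
    simp only [star_trivial] at this
    linarith

theorem optimal_feedback_general {n m p : ℕ}
    (A : Matrix (Fin n) (Fin n) ℝ) (B : Matrix (Fin n) (Fin m) ℝ)
    (C : Matrix (Fin n) (Fin p) ℝ) (G : Matrix (Fin p) (Fin n) ℝ)
    (M : Matrix (Fin n) (Fin n) ℝ)
    (hM : M = 1 - C * (G * C)⁻¹ * G)
    (D : Matrix (Fin n) (Fin m) ℝ)
    (hD : D = B - C * (G * C)⁻¹ * (G * B))
    (Q : Matrix (Fin n) (Fin n) ℝ)
    (R : Matrix (Fin m) (Fin m) ℝ) (hR : R.PosDef)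
    (P : Matrix (Fin n) (Fin n) ℝ) (hP : P.PosSemidef)
    (J : (Fin n → ℝ) → (Fin m → ℝ) → ℝ)
    (hJ : J = fun z u =>
      (1 / 2) * (z ⬝ᵥ (Q *ᵥ z) + u ⬝ᵥ (R *ᵥ u) +
        (M *ᵥ (A *ᵥ z + B *ᵥ u)) ⬝ᵥ (P *ᵥ (M *ᵥ (A *ᵥ z + B *ᵥ u)))))
    (K : Matrix (Fin m) (Fin n) ℝ)
    (hK : K = (R + Dᵀ * P * D)⁻¹ * (Dᵀ * P * M * A)) :
    ∀ (z : Fin n → ℝ) (u : Fin m → ℝ),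
      J z (-(K *ᵥ z)) ≤ J z u ∧ (J z (-(K *ᵥ z)) = J z u → u = -(K *ᵥ z)) := by
  intro z u
  have hS : (R + Dᵀ * P * D).PosDef :=
    hR.add_posSemidef (by simpa using hP.conjTranspose_mul_mul_same D)
  have hSK : (R + Dᵀ * P * D) * K = Dᵀ * P * M * A := by
    rw [hK, ← Matrix.mul_assoc, mul_nonsing_inv _ (isUnit_iff_isUnit_det _ |>.mp hS.isUnit),
      Matrix.one_mul]
  have hMB : M * B = D := by rw [hM, hD, Matrix.sub_mul, Matrix.one_mul, Matrix.mul_assoc]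
  have hPsymm : P.IsSymm := isHermitian_iff_isSymm.mp hP.isHermitian
  refine hS.neg_isUniqueMin_of_eq_quadratic
    (c := 1 / 2 * (z ⬝ᵥ Q *ᵥ z + (M *ᵥ A *ᵥ z) ⬝ᵥ P *ᵥ (M *ᵥ A *ᵥ z))) (fun x => ?_) u
  simp only [hJ]
  rw [mulVec_add, mulVec_mulVec x M B, hMB, hPsymm.dotProduct_mulVec_add_mulVec,
    mulVec_mulVec z _ K, hSK]
  simp only [mulVec_mulVec, Matrix.mul_assoc, add_mulVec, dotProduct_add]
  ring

/-- Linear optimal feedback law: for every `z`, the unique minimizer of `u ↦ J z u`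
is `u* = -K z` with `K = (R + Dᵀ P D)⁻¹ Dᵀ P M A`; i.e. `J z (-K z) ≤ J z u` for all
`u`, with equality only when `u = -K z`. -/
theorem optimal_feedback {n m p : ℕ}
    (A : Matrix (Fin n) (Fin n) ℝ) (B : Matrix (Fin n) (Fin m) ℝ)
    (C : Matrix (Fin n) (Fin p) ℝ) (G : Matrix (Fin p) (Fin n) ℝ)
    (hGC : IsUnit (G * C))
    (M : Matrix (Fin n) (Fin n) ℝ)
    (hM : M = 1 - C * (G * C)⁻¹ * G)
    (D : Matrix (Fin n) (Fin m) ℝ)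
    (hD : D = B - C * (G * C)⁻¹ * (G * B))
    (Q : Matrix (Fin n) (Fin n) ℝ) (hQ : Q.PosSemidef)
    (R : Matrix (Fin m) (Fin m) ℝ) (hR : R.PosDef)
    (P : Matrix (Fin n) (Fin n) ℝ) (hP : P.PosSemidef)
    (J : (Fin n → ℝ) → (Fin m → ℝ) → ℝ)
    (hJ : J = fun z u =>
      (1 / 2) * (z ⬝ᵥ (Q *ᵥ z) + u ⬝ᵥ (R *ᵥ u) +
        (M *ᵥ (A *ᵥ z + B *ᵥ u)) ⬝ᵥ (P *ᵥ (M *ᵥ (A *ᵥ z + B *ᵥ u)))))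
    (K : Matrix (Fin m) (Fin n) ℝ)
    (hK : K = (R + Dᵀ * P * D)⁻¹ * (Dᵀ * P * M * A)) :
    ∀ (z : Fin n → ℝ) (u : Fin m → ℝ),
      J z (-(K *ᵥ z)) ≤ J z u ∧ (J z (-(K *ᵥ z)) = J z u → u = -(K *ᵥ z)) :=
  optimal_feedback_general A B C G M hM D hD Q R hR P hP J hJ K hK
end

section
/- The pair (u*, λ*) := (−Kz, −Lz) satisfies, for every z ∈ ℝⁿ, the linear system [[R + DᵀPB, DᵀPC],[GB, GC]] · (u*, λ*) = −[[DᵀP],[G]] · Az; that is, (R + DᵀPB)u* + DᵀPCλ* = −DᵀPAz and GBu* + GCλ* = −GAz. -/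
open Matrix

/-!
Writing `N := C (GC)⁻¹ G`, so that `M = 1 - N` and `D = M B`, the definition of `L` gives
`C L = N (A - B K)` and `G C L = G (A - B K)`. The second row of the system is then immediate, and
substituting `C L` into the first row leaves `(R + DᵀPD) K - DᵀPMA`, which vanishes by the
definition of `K`.
-/

namespace Matrix

variable {ι κ μ ν α : Type*} [Fintype ι] [Fintype κ] [Fintype μ]

theorem mulVec_neg_add_mulVec_neg_of_mul_add_mul_eq [Ring α]
    {X : Matrix ν κ α} {Y : Matrix ν μ α} {K : Matrix κ ι α} {L : Matrix μ ι α}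
    {Z : Matrix ν ι α} (h : X * K + Y * L = Z) (z : ι → α) :
    X *ᵥ -(K *ᵥ z) + Y *ᵥ -(L *ᵥ z) = -(Z *ᵥ z) := by
  rw [← h, mulVec_neg, mulVec_neg, mulVec_mulVec, mulVec_mulVec, add_mulVec, neg_add]

theorem transpose_mul_mul_add_mul_eq_of_gain [Ring α] [DecidableEq ι]
    {A N : Matrix ι ι α} {B D : Matrix ι κ α} {C : Matrix ι μ α} {P : Matrix ι ι α}
    {R : Matrix κ κ α} {K : Matrix κ ι α} {L : Matrix μ ι α}
    (hD : D = (1 - N) * B) (hK : (R + Dᵀ * P * D) * K = Dᵀ * P * (1 - N) * A)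
    (hCL : C * L = N * (A - B * K)) :
    (R + Dᵀ * P * B) * K + Dᵀ * P * C * L = Dᵀ * P * A := by
  calc (R + Dᵀ * P * B) * K + Dᵀ * P * C * L
      = (R + Dᵀ * P * ((1 - N) * B)) * K + Dᵀ * P * A - Dᵀ * P * (1 - N) * A := by
        rw [Matrix.mul_assoc (Dᵀ * P) C L, hCL]
        simp only [Matrix.mul_sub, Matrix.sub_mul, Matrix.add_mul,
          Matrix.one_mul, Matrix.mul_one, Matrix.mul_assoc]
        abel
    _ = Dᵀ * P * A := by rw [← hD, hK, add_sub_cancel_left]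

end Matrix

theorem feedback_satisfies_system_general {n m p : ℕ}
    (A : Matrix (Fin n) (Fin n) ℝ) (B : Matrix (Fin n) (Fin m) ℝ)
    (C : Matrix (Fin n) (Fin p) ℝ) (G : Matrix (Fin p) (Fin n) ℝ)
    (hGC : IsUnit (G * C))
    (M : Matrix (Fin n) (Fin n) ℝ)
    (hM : M = 1 - C * (G * C)⁻¹ * G)
    (D : Matrix (Fin n) (Fin m) ℝ)
    (hD : D = B - C * (G * C)⁻¹ * (G * B))
    (R : Matrix (Fin m) (Fin m) ℝ) (hR : R.PosDef)
    (P : Matrix (Fin n) (Fin n) ℝ) (hP : P.PosSemidef)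
    (K : Matrix (Fin m) (Fin n) ℝ)
    (hK : K = (R + Dᵀ * P * D)⁻¹ * (Dᵀ * P * M * A))
    (L : Matrix (Fin p) (Fin n) ℝ)
    (hL : L = (G * C)⁻¹ * (G * (A - B * K))) :
    ∀ z : Fin n → ℝ,
      (R + Dᵀ * P * B) *ᵥ (-(K *ᵥ z)) + (Dᵀ * P * C) *ᵥ (-(L *ᵥ z)) =
          -((Dᵀ * P * A) *ᵥ z) ∧
        (G * B) *ᵥ (-(K *ᵥ z)) + (G * C) *ᵥ (-(L *ᵥ z)) = -((G * A) *ᵥ z) := by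
  have hRD : IsUnit (R + Dᵀ * P * D) :=
    (hR.add_posSemidef (by simpa using hP.conjTranspose_mul_mul_same D)).isUnit
  have hGCL : G * C * L = G * (A - B * K) := by
    rw [hL, mul_nonsing_inv_cancel_left _ _ ((isUnit_iff_isUnit_det _).mp hGC)]
  have hRow₁ : (R + Dᵀ * P * B) * K + Dᵀ * P * C * L = Dᵀ * P * A := by
    refine transpose_mul_mul_add_mul_eq_of_gain (N := C * (G * C)⁻¹ * G) ?_ ?_ ?_
    · simp only [hD, Matrix.sub_mul, Matrix.one_mul, Matrix.mul_assoc]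
    · rw [hK, ← hM, mul_nonsing_inv_cancel_left _ _ ((isUnit_iff_isUnit_det _).mp hRD)]
    · rw [hL]; simp only [Matrix.mul_assoc]
  have hRow₂ : G * B * K + G * C * L = G * A := by
    rw [hGCL, Matrix.mul_sub, Matrix.mul_assoc, add_sub_cancel]
  exact fun z => ⟨mulVec_neg_add_mulVec_neg_of_mul_add_mul_eq hRow₁ z,
    mulVec_neg_add_mulVec_neg_of_mul_add_mul_eq hRow₂ z⟩

/-- The pair `(u*, lam*) = (-K z, -L z)` satisfies, for every `z`, the linear system
`(R + Dᵀ P B) u* + Dᵀ P C lam* = -Dᵀ P A z` and `G B u* + G C lam* = -G A z`. -/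
theorem feedback_satisfies_system {n m p : ℕ}
    (A : Matrix (Fin n) (Fin n) ℝ) (B : Matrix (Fin n) (Fin m) ℝ)
    (C : Matrix (Fin n) (Fin p) ℝ) (G : Matrix (Fin p) (Fin n) ℝ)
    (hGC : IsUnit (G * C))
    (M : Matrix (Fin n) (Fin n) ℝ)
    (hM : M = 1 - C * (G * C)⁻¹ * G)
    (D : Matrix (Fin n) (Fin m) ℝ)
    (hD : D = B - C * (G * C)⁻¹ * (G * B))
    (Q : Matrix (Fin n) (Fin n) ℝ) (hQ : Q.PosSemidef)
    (R : Matrix (Fin m) (Fin m) ℝ) (hR : R.PosDef)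
    (P : Matrix (Fin n) (Fin n) ℝ) (hP : P.PosSemidef)
    (K : Matrix (Fin m) (Fin n) ℝ)
    (hK : K = (R + Dᵀ * P * D)⁻¹ * (Dᵀ * P * M * A))
    (L : Matrix (Fin p) (Fin n) ℝ)
    (hL : L = (G * C)⁻¹ * (G * (A - B * K))) :
    ∀ z : Fin n → ℝ,
      (R + Dᵀ * P * B) *ᵥ (-(K *ᵥ z)) + (Dᵀ * P * C) *ᵥ (-(L *ᵥ z)) =
          -((Dᵀ * P * A) *ᵥ z) ∧
        (G * B) *ᵥ (-(K *ᵥ z)) + (G * C) *ᵥ (-(L *ᵥ z)) = -((G * A) *ᵥ z) :=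
  feedback_satisfies_system_general A B C G hGC M hM D hD R hR P hP K hK L hL
end

section
/- The (m+p)×(m+p) block matrix [[R + DᵀPB, DᵀPC],[GB, GC]] is invertible; consequently, for each z ∈ ℝⁿ the linear system [[R + DᵀPB, DᵀPC],[GB, GC]]·(u,λ) = −[[DᵀP],[G]]·Az has the unique solution (u,λ) = (−Kz, −Lz). -/
open Matrix

/-- The block matrix `[[R + Dᵀ P B, Dᵀ P C], [G B, G C]]` is invertible; consequently,
for each `z` the linear system has the unique solution `(u, lam) = (-K z, -L z)`. -/
theorem block_system_unique_solution {n m p : ℕ}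
    (A : Matrix (Fin n) (Fin n) ℝ) (B : Matrix (Fin n) (Fin m) ℝ)
    (C : Matrix (Fin n) (Fin p) ℝ) (G : Matrix (Fin p) (Fin n) ℝ)
    (hGC : IsUnit (G * C))
    (M : Matrix (Fin n) (Fin n) ℝ)
    (hM : M = 1 - C * (G * C)⁻¹ * G)
    (D : Matrix (Fin n) (Fin m) ℝ)
    (hD : D = B - C * (G * C)⁻¹ * (G * B))
    (Q : Matrix (Fin n) (Fin n) ℝ) (hQ : Q.PosSemidef)
    (R : Matrix (Fin m) (Fin m) ℝ) (hR : R.PosDef)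
    (P : Matrix (Fin n) (Fin n) ℝ) (hP : P.PosSemidef)
    (K : Matrix (Fin m) (Fin n) ℝ)
    (hK : K = (R + Dᵀ * P * D)⁻¹ * (Dᵀ * P * M * A))
    (L : Matrix (Fin p) (Fin n) ℝ)
    (hL : L = (G * C)⁻¹ * (G * (A - B * K))) :
    IsUnit (fromBlocks (R + Dᵀ * P * B) (Dᵀ * P * C) (G * B) (G * C)) ∧
      ∀ (z : Fin n → ℝ) (u : Fin m → ℝ) (lam : Fin p → ℝ),
        ((R + Dᵀ * P * B) *ᵥ u + (Dᵀ * P * C) *ᵥ lam = -((Dᵀ * P * A) *ᵥ z) ∧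
            (G * B) *ᵥ u + (G * C) *ᵥ lam = -((G * A) *ᵥ z)) ↔
          (u = -(K *ᵥ z) ∧ lam = -(L *ᵥ z)) := by
  have hDPD : (Dᵀ * P * D).PosSemidef := by
    simpa [conjTranspose_eq_transpose_of_trivial] using hP.conjTranspose_mul_mul_same D
  have hS : (R + Dᵀ * P * D).PosDef := hR.add_posSemidef hDPD
  have hSU : IsUnit (R + Dᵀ * P * D) := hS.isUnit
  obtain ⟨iGC⟩ := hGC.nonempty_invertible
  obtain ⟨iS⟩ := hSU.nonempty_invertible
  have hinvGC : (⅟(G * C) : Matrix (Fin p) (Fin p) ℝ) = (G * C)⁻¹ := invOf_eq_nonsing_inv _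
  -- key identity
  have hKey : Dᵀ * P * C * (G * C)⁻¹ * (G * B) = Dᵀ * P * B - Dᵀ * P * D := by
    nth_rewrite 4 [hD]
    rw [Matrix.mul_sub, sub_sub_cancel]
    simp [Matrix.mul_assoc]
  have hSchur : (R + Dᵀ * P * B) - (Dᵀ * P * C) * ⅟(G * C) * (G * B) = R + Dᵀ * P * D := by
    rw [hinvGC, hKey]; abel
  haveI : Invertible ((R + Dᵀ * P * B) - (Dᵀ * P * C) * ⅟(G * C) * (G * B)) := by
    rw [hSchur]; exact iS
  haveI : Invertible (fromBlocks (R + Dᵀ * P * B) (Dᵀ * P * C) (G * B) (G * C)) :=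
    fromBlocks₂₂Invertible _ _ _ _
  have hXU : IsUnit (fromBlocks (R + Dᵀ * P * B) (Dᵀ * P * C) (G * B) (G * C)) :=
    isUnit_of_invertible _
  refine ⟨hXU, fun z u lam => ?_⟩
  have hdetGC : IsUnit (G * C).det := (isUnit_iff_isUnit_det _).mp hGC
  have hGCL : (G * C) * L = G * A - G * B * K := by
    rw [hL, Matrix.mul_nonsing_inv_cancel_left _ _ hdetGC, Matrix.mul_sub, Matrix.mul_assoc]
  have hSK : (R + Dᵀ * P * D) * K = Dᵀ * P * M * A := by
    rw [hK, Matrix.mul_nonsing_inv_cancel_left _ _ ((isUnit_iff_isUnit_det _).mp hSU)]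
  have hE2 : (G * B) * K + (G * C) * L = G * A := by rw [hGCL]; abel
  have hE1 : (R + Dᵀ * P * B) * K + (Dᵀ * P * C) * L = Dᵀ * P * A := by
    have hsplit : R + Dᵀ * P * B = (R + Dᵀ * P * D) + Dᵀ * P * C * (G * C)⁻¹ * (G * B) := by
      rw [hKey]; abel
    have h2 : (Dᵀ * P * C) * L
        = Dᵀ * P * C * (G * C)⁻¹ * (G * A) - Dᵀ * P * C * (G * C)⁻¹ * (G * B) * K := by
      rw [hL]
      simp only [Matrix.mul_sub, Matrix.mul_assoc]
    rw [hsplit, Matrix.add_mul, hSK, h2, hM]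
    simp only [Matrix.mul_sub, Matrix.sub_mul, Matrix.mul_one, Matrix.mul_assoc]
    abel
  have hcand1 : (R + Dᵀ * P * B) *ᵥ (-(K *ᵥ z)) + (Dᵀ * P * C) *ᵥ (-(L *ᵥ z))
      = -((Dᵀ * P * A) *ᵥ z) := by
    rw [mulVec_neg, mulVec_neg, mulVec_mulVec, mulVec_mulVec, ← neg_add, ← add_mulVec, hE1]
  have hcand2 : (G * B) *ᵥ (-(K *ᵥ z)) + (G * C) *ᵥ (-(L *ᵥ z)) = -((G * A) *ᵥ z) := by
    rw [mulVec_neg, mulVec_neg, mulVec_mulVec, mulVec_mulVec, ← neg_add, ← add_mulVec, hE2]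
  constructor
  · rintro ⟨h1, h2⟩
    have hinj := mulVec_injective_of_invertible
      (fromBlocks (R + Dᵀ * P * B) (Dᵀ * P * C) (G * B) (G * C))
    have heq : (fromBlocks (R + Dᵀ * P * B) (Dᵀ * P * C) (G * B) (G * C)) *ᵥ Sum.elim u lam
        = (fromBlocks (R + Dᵀ * P * B) (Dᵀ * P * C) (G * B) (G * C)) *ᵥ
          Sum.elim (-(K *ᵥ z)) (-(L *ᵥ z)) := by
      rw [fromBlocks_mulVec, fromBlocks_mulVec]
      simp only [Sum.elim_comp_inl, Sum.elim_comp_inr]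
      rw [h1, h2, hcand1, hcand2]
    have h := hinj heq
    exact ⟨funext fun i => congrFun h (Sum.inl i), funext fun i => congrFun h (Sum.inr i)⟩
  · rintro ⟨hu, hl⟩
    subst hu hl
    exact ⟨hcand1, hcand2⟩
end

section
/- Constrained Riccati update: for every z ∈ ℝⁿ, the minimal one-step cost-to-go satisfies min over u ∈ ℝᵐ of J(z,u) = J(z, −Kz) = ½ zᵀP'z, where P' := Q + KᵀRK + ĀᵀPĀ and Ā := A − BK − CL. -/
/-!
Substituting the constraint turns the problem into an unconstrained one-step LQR problem:
the constrained next state is `M (A z + B u) = (M A) z + D u` because `M B = D`, and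
`Ā = (1 - C (G C)⁻¹ G) (A - B K) = M A - D K`. For the unconstrained problem with dynamics
`(A, B)`, gain `K = (R + Bᵀ P B)⁻¹ Bᵀ P A` and `v = K z`, completing the square gives
`J(z, u) - J(z, -v) = ½ (u + v)ᵀ (R + Bᵀ P B) (u + v) ≥ 0`, while `J(z, -K z) = ½ zᵀ P' z`
holds for every `K` by expanding the definition.
-/

open Matrix

namespace Matrix

variable {α m n : Type*} [CommSemiring α] [Fintype m] [Fintype n]

theorem dotProduct_transpose_mul_mul_mulVec (X : Matrix m n α) (Y : Matrix m m α) (x : n → α) :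
    x ⬝ᵥ ((Xᵀ * Y * X) *ᵥ x) = (X *ᵥ x) ⬝ᵥ (Y *ᵥ (X *ᵥ x)) := by
  rw [Matrix.mul_assoc, ← mulVec_mulVec, dotProduct_transpose_mulVec, ← mulVec_mulVec,
    dotProduct_comm]

theorem mulVec_dotProduct_mulVec (X : Matrix m n α) (Y : Matrix m m α) (x : n → α)
    (y : m → α) : (X *ᵥ x) ⬝ᵥ (Y *ᵥ y) = x ⬝ᵥ ((Xᵀ * Y) *ᵥ y) := by
  rw [← mulVec_mulVec, dotProduct_transpose_mulVec, dotProduct_comm]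

theorem IsSymm.dotProduct_mulVec_comm_s13 {A : Matrix n n α} (hA : A.IsSymm) (x y : n → α) :
    x ⬝ᵥ (A *ᵥ y) = y ⬝ᵥ (A *ᵥ x) := by
  rw [← dotProduct_transpose_mulVec, hA.eq]

end Matrix

section LQR

variable {ι κ ν : Type*} [Fintype ι] [Fintype κ] [Fintype ν]
  (Q : Matrix ι ι ℝ) (R : Matrix κ κ ℝ) (P : Matrix ν ν ℝ) (A : Matrix ν ι ℝ) (B : Matrix ν κ ℝ)

noncomputable def lqrCost (z : ι → ℝ) (u : κ → ℝ) : ℝ :=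
  (1 / 2) * (z ⬝ᵥ (Q *ᵥ z) + u ⬝ᵥ (R *ᵥ u) +
    (A *ᵥ z + B *ᵥ u) ⬝ᵥ (P *ᵥ (A *ᵥ z + B *ᵥ u)))

theorem lqrCost_neg_mulVec (K : Matrix κ ι ℝ) (z : ι → ℝ) :
    lqrCost Q R P A B z (-(K *ᵥ z)) =
      (1 / 2) * (z ⬝ᵥ ((Q + Kᵀ * R * K + (A - B * K)ᵀ * P * (A - B * K)) *ᵥ z)) := by
  rw [lqrCost, add_mulVec, add_mulVec, dotProduct_add, dotProduct_add,
    dotProduct_transpose_mul_mul_mulVec, dotProduct_transpose_mul_mul_mulVec, sub_mulVec,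
    ← mulVec_mulVec]
  simp only [mulVec_neg, dotProduct_neg, neg_dotProduct, neg_neg, ← sub_eq_add_neg]

theorem lqrCost_sub_lqrCost_neg (hR : R.IsSymm) (hP : P.IsSymm) {z : ι → ℝ} {v : κ → ℝ}
    (hv : (R + Bᵀ * P * B) *ᵥ v = (Bᵀ * P * A) *ᵥ z) (u : κ → ℝ) :
    lqrCost Q R P A B z u - lqrCost Q R P A B z (-v) =
      (1 / 2) * ((u + v) ⬝ᵥ ((R + Bᵀ * P * B) *ᵥ (u + v))) := by
  set S := R + Bᵀ * P * B
  have hS : S.IsSymm := hR.add <| by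
    simp only [IsSymm, transpose_mul, transpose_transpose, hP.eq, Matrix.mul_assoc]
  have hBA : ∀ x, (B *ᵥ x) ⬝ᵥ (P *ᵥ (A *ᵥ z)) = x ⬝ᵥ (S *ᵥ v) := fun x => by
    rw [mulVec_dotProduct_mulVec, mulVec_mulVec, hv]
  have hAB : ∀ x, (A *ᵥ z) ⬝ᵥ (P *ᵥ (B *ᵥ x)) = x ⬝ᵥ (S *ᵥ v) := fun x => by
    rw [hP.dotProduct_mulVec_comm_s13, hBA]
  have hquad : ∀ x y, (B *ᵥ x) ⬝ᵥ (P *ᵥ (B *ᵥ y)) = x ⬝ᵥ (S *ᵥ y) - x ⬝ᵥ (R *ᵥ y) :=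
    fun x y => by
      rw [mulVec_dotProduct_mulVec, mulVec_mulVec, add_mulVec, dotProduct_add]
      ring
  have hSvu : v ⬝ᵥ (S *ᵥ u) = u ⬝ᵥ (S *ᵥ v) := hS.dotProduct_mulVec_comm_s13 v u
  simp only [lqrCost, mulVec_add, mulVec_neg, dotProduct_add, add_dotProduct, dotProduct_neg,
    neg_dotProduct, hBA, hAB, hquad, hSvu]
  ring

theorem lqrCost_neg_gain_le [DecidableEq κ] (hR : R.PosDef) (hP : P.PosSemidef) (z : ι → ℝ)
    (u : κ → ℝ) :
    lqrCost Q R P A B z (-(((R + Bᵀ * P * B)⁻¹ * (Bᵀ * P * A)) *ᵥ z)) ≤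
      lqrCost Q R P A B z u := by
  set S := R + Bᵀ * P * B
  have hS : S.PosDef := by
    simpa using hR.add_posSemidef (hP.conjTranspose_mul_mul_same B)
  have hv : S *ᵥ ((S⁻¹ * (Bᵀ * P * A)) *ᵥ z) = (Bᵀ * P * A) *ᵥ z := by
    rw [mulVec_mulVec, mul_nonsing_inv_cancel_left (h := (isUnit_iff_isUnit_det _).mp hS.isUnit)]
  have hsq := lqrCost_sub_lqrCost_neg Q R P A B (by simpa using hR.isHermitian)
    (by simpa using hP.isHermitian) hv u
  have hnonneg := hS.posSemidef.dotProduct_mulVec_nonneg (u + (S⁻¹ * (Bᵀ * P * A)) *ᵥ z)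
  rw [star_trivial] at hnonneg
  linarith

end LQR

theorem riccati_update_general {n m p : ℕ}
    (A : Matrix (Fin n) (Fin n) ℝ) (B : Matrix (Fin n) (Fin m) ℝ)
    (C : Matrix (Fin n) (Fin p) ℝ) (G : Matrix (Fin p) (Fin n) ℝ)
    (M : Matrix (Fin n) (Fin n) ℝ)
    (hM : M = 1 - C * (G * C)⁻¹ * G)
    (D : Matrix (Fin n) (Fin m) ℝ)
    (hD : D = B - C * (G * C)⁻¹ * (G * B))
    (Q : Matrix (Fin n) (Fin n) ℝ)
    (R : Matrix (Fin m) (Fin m) ℝ) (hR : R.PosDef)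
    (P : Matrix (Fin n) (Fin n) ℝ) (hP : P.PosSemidef)
    (J : (Fin n → ℝ) → (Fin m → ℝ) → ℝ)
    (hJ : J = fun z u =>
      (1 / 2) * (z ⬝ᵥ (Q *ᵥ z) + u ⬝ᵥ (R *ᵥ u) +
        (M *ᵥ (A *ᵥ z + B *ᵥ u)) ⬝ᵥ (P *ᵥ (M *ᵥ (A *ᵥ z + B *ᵥ u)))))
    (K : Matrix (Fin m) (Fin n) ℝ)
    (hK : K = (R + Dᵀ * P * D)⁻¹ * (Dᵀ * P * M * A))
    (L : Matrix (Fin p) (Fin n) ℝ)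
    (hL : L = (G * C)⁻¹ * (G * (A - B * K)))
    (Abar : Matrix (Fin n) (Fin n) ℝ)
    (hAbar : Abar = A - B * K - C * L)
    (P' : Matrix (Fin n) (Fin n) ℝ)
    (hP' : P' = Q + Kᵀ * R * K + Abarᵀ * P * Abar) :
    ∀ z : Fin n → ℝ,
      (∀ u : Fin m → ℝ, J z (-(K *ᵥ z)) ≤ J z u) ∧
        J z (-(K *ᵥ z)) = (1 / 2) * (z ⬝ᵥ (P' *ᵥ z)) := by
  have hMB : M * B = D := by
    rw [hM, hD, Matrix.sub_mul, Matrix.one_mul, Matrix.mul_assoc]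
  have hJ' : J = lqrCost Q R P (M * A) D := by
    funext z u
    simp only [hJ, lqrCost, mulVec_add, mulVec_mulVec, hMB]
  have hAbar' : Abar = M * A - D * K :=
    calc Abar = M * (A - B * K) := by
          rw [hAbar, hL, hM, Matrix.sub_mul, Matrix.one_mul, Matrix.mul_assoc, Matrix.mul_assoc]
      _ = M * A - D * K := by rw [Matrix.mul_sub, ← hMB, Matrix.mul_assoc]
  rw [Matrix.mul_assoc (Dᵀ * P)] at hK
  subst hJ' hP' hAbar' hK
  exact fun z => ⟨lqrCost_neg_gain_le Q R P (M * A) D hR hP z,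
    lqrCost_neg_mulVec Q R P (M * A) D _ z⟩

/-- Constrained Riccati update: for every `z`, the minimal one-step cost-to-go
satisfies `min_u J z u = J z (-K z) = ½ zᵀ P' z`, where
`P' = Q + Kᵀ R K + Āᵀ P Ā` and `Ā = A - B K - C L`. -/
theorem riccati_update {n m p : ℕ}
    (A : Matrix (Fin n) (Fin n) ℝ) (B : Matrix (Fin n) (Fin m) ℝ)
    (C : Matrix (Fin n) (Fin p) ℝ) (G : Matrix (Fin p) (Fin n) ℝ)
    (hGC : IsUnit (G * C))
    (M : Matrix (Fin n) (Fin n) ℝ)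
    (hM : M = 1 - C * (G * C)⁻¹ * G)
    (D : Matrix (Fin n) (Fin m) ℝ)
    (hD : D = B - C * (G * C)⁻¹ * (G * B))
    (Q : Matrix (Fin n) (Fin n) ℝ) (hQ : Q.PosSemidef)
    (R : Matrix (Fin m) (Fin m) ℝ) (hR : R.PosDef)
    (P : Matrix (Fin n) (Fin n) ℝ) (hP : P.PosSemidef)
    (J : (Fin n → ℝ) → (Fin m → ℝ) → ℝ)
    (hJ : J = fun z u =>
      (1 / 2) * (z ⬝ᵥ (Q *ᵥ z) + u ⬝ᵥ (R *ᵥ u) +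
        (M *ᵥ (A *ᵥ z + B *ᵥ u)) ⬝ᵥ (P *ᵥ (M *ᵥ (A *ᵥ z + B *ᵥ u)))))
    (K : Matrix (Fin m) (Fin n) ℝ)
    (hK : K = (R + Dᵀ * P * D)⁻¹ * (Dᵀ * P * M * A))
    (L : Matrix (Fin p) (Fin n) ℝ)
    (hL : L = (G * C)⁻¹ * (G * (A - B * K)))
    (Abar : Matrix (Fin n) (Fin n) ℝ)
    (hAbar : Abar = A - B * K - C * L)
    (P' : Matrix (Fin n) (Fin n) ℝ)
    (hP' : P' = Q + Kᵀ * R * K + Abarᵀ * P * Abar) :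
    ∀ z : Fin n → ℝ,
      (∀ u : Fin m → ℝ, J z (-(K *ᵥ z)) ≤ J z u) ∧
        J z (-(K *ᵥ z)) = (1 / 2) * (z ⬝ᵥ (P' *ᵥ z)) :=
  riccati_update_general A B C G M hM D hD Q R hR P hP J hJ K hK L hL Abar hAbar P' hP'
end

section
/- Equivalence of the Joseph form and the standard form of the constrained Riccati update: Q + KᵀRK + ĀᵀPĀ = Q + AᵀMᵀPMA − AᵀMᵀPD(R + DᵀPD)⁻¹DᵀPMA, where Ā := A − BK − CL. -/
/-!
The closed-loop matrix `Ā = A - B K - C L` equals `M A - D K`: the term `C L` is exactly what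
`M` removes from `A - B K`, and `M B = D`. With `X := M A`, the gain solves the normal equation
`(R + Dᵀ P D) K = Dᵀ P X`, and completing the square turns the Joseph form
`Kᵀ R K + (X - D K)ᵀ P (X - D K)` into `Xᵀ P X - Xᵀ P D K`.
-/

open Matrix

namespace Matrix

variable {ι κ ν 𝕜 : Type*} [Fintype ι] [Fintype κ] [CommRing 𝕜]

theorem joseph_form_eq_of_mul_eq {R : Matrix κ κ 𝕜} {P : Matrix ι ι 𝕜} {D : Matrix ι κ 𝕜}
    {X : Matrix ι ν 𝕜} {K : Matrix κ ν 𝕜} (hK : (R + Dᵀ * P * D) * K = Dᵀ * P * X) :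
    Kᵀ * R * K + (X - D * K)ᵀ * P * (X - D * K) = Xᵀ * P * X - Xᵀ * P * D * K := by
  have hquad : Kᵀ * R * K + Kᵀ * Dᵀ * P * D * K = Kᵀ * Dᵀ * P * X := by
    calc Kᵀ * R * K + Kᵀ * Dᵀ * P * D * K = Kᵀ * ((R + Dᵀ * P * D) * K) := by
          simp only [Matrix.mul_add, Matrix.add_mul, Matrix.mul_assoc]
      _ = Kᵀ * Dᵀ * P * X := by rw [hK]; simp only [Matrix.mul_assoc]
  calc Kᵀ * R * K + (X - D * K)ᵀ * P * (X - D * K)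
      = (Kᵀ * R * K + Kᵀ * Dᵀ * P * D * K) + Xᵀ * P * X - Xᵀ * P * D * K
          - Kᵀ * Dᵀ * P * X := by
        simp only [transpose_sub, transpose_mul, Matrix.sub_mul, Matrix.mul_sub, Matrix.mul_assoc]
        abel
    _ = Xᵀ * P * X - Xᵀ * P * D * K := by
        rw [hquad]
        abel

end Matrix

theorem joseph_form_eq_standard_form_general {n m p : ℕ}
    (A : Matrix (Fin n) (Fin n) ℝ) (B : Matrix (Fin n) (Fin m) ℝ)
    (C : Matrix (Fin n) (Fin p) ℝ) (G : Matrix (Fin p) (Fin n) ℝ)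
    (M : Matrix (Fin n) (Fin n) ℝ)
    (hM : M = 1 - C * (G * C)⁻¹ * G)
    (D : Matrix (Fin n) (Fin m) ℝ)
    (hD : D = B - C * (G * C)⁻¹ * (G * B))
    (Q : Matrix (Fin n) (Fin n) ℝ)
    (R : Matrix (Fin m) (Fin m) ℝ) (hR : R.PosDef)
    (P : Matrix (Fin n) (Fin n) ℝ) (hP : P.PosSemidef)
    (K : Matrix (Fin m) (Fin n) ℝ)
    (hK : K = (R + Dᵀ * P * D)⁻¹ * (Dᵀ * P * M * A))
    (L : Matrix (Fin p) (Fin n) ℝ)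
    (hL : L = (G * C)⁻¹ * (G * (A - B * K)))
    (Abar : Matrix (Fin n) (Fin n) ℝ)
    (hAbar : Abar = A - B * K - C * L) :
    Q + Kᵀ * R * K + Abarᵀ * P * Abar =
      Q + Aᵀ * Mᵀ * P * M * A -
        Aᵀ * Mᵀ * P * D * (R + Dᵀ * P * D)⁻¹ * Dᵀ * P * M * A := by
  have hS : (R + Dᵀ * P * D).PosDef :=
    hR.add_posSemidef (by simpa using hP.conjTranspose_mul_mul_same D)
  have hSK : (R + Dᵀ * P * D) * K = Dᵀ * P * (M * A) := by
    rw [hK, mul_nonsing_inv_cancel_left _ _ ((isUnit_iff_isUnit_det _).mp hS.isUnit),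
      Matrix.mul_assoc]
  have hAbar' : Abar = M * A - D * K := by
    rw [hAbar, hL, hM, hD]
    simp only [Matrix.mul_sub, Matrix.sub_mul, Matrix.mul_assoc, Matrix.one_mul]
    abel
  rw [add_assoc, hAbar', joseph_form_eq_of_mul_eq hSK, hK]
  simp only [transpose_mul, Matrix.mul_assoc, add_sub_assoc]

/-- Equivalence of the Joseph form and the standard form of the constrained Riccati
update: `Q + Kᵀ R K + Āᵀ P Ā = Q + Aᵀ Mᵀ P M A - Aᵀ Mᵀ P D (R + Dᵀ P D)⁻¹ Dᵀ P M A`. -/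
theorem joseph_form_eq_standard_form {n m p : ℕ}
    (A : Matrix (Fin n) (Fin n) ℝ) (B : Matrix (Fin n) (Fin m) ℝ)
    (C : Matrix (Fin n) (Fin p) ℝ) (G : Matrix (Fin p) (Fin n) ℝ)
    (hGC : IsUnit (G * C))
    (M : Matrix (Fin n) (Fin n) ℝ)
    (hM : M = 1 - C * (G * C)⁻¹ * G)
    (D : Matrix (Fin n) (Fin m) ℝ)
    (hD : D = B - C * (G * C)⁻¹ * (G * B))
    (Q : Matrix (Fin n) (Fin n) ℝ) (hQ : Q.PosSemidef)
    (R : Matrix (Fin m) (Fin m) ℝ) (hR : R.PosDef)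
    (P : Matrix (Fin n) (Fin n) ℝ) (hP : P.PosSemidef)
    (K : Matrix (Fin m) (Fin n) ℝ)
    (hK : K = (R + Dᵀ * P * D)⁻¹ * (Dᵀ * P * M * A))
    (L : Matrix (Fin p) (Fin n) ℝ)
    (hL : L = (G * C)⁻¹ * (G * (A - B * K)))
    (Abar : Matrix (Fin n) (Fin n) ℝ)
    (hAbar : Abar = A - B * K - C * L) :
    Q + Kᵀ * R * K + Abarᵀ * P * Abar =
      Q + Aᵀ * Mᵀ * P * M * A -
        Aᵀ * Mᵀ * P * D * (R + Dᵀ * P * D)⁻¹ * Dᵀ * P * M * A :=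
  joseph_form_eq_standard_form_general A B C G M hM D hD Q R hR P hP K hK L hL Abar hAbar
end

section
/- Every matrix P_k produced by the backward constrained Riccati recursion (P_N = Q and P_k = Q + K_kᵀRK_k + Ā_kᵀP_{k+1}Ā_k for k = N−1, …, 0) is symmetric positive semidefinite, and every R + DᵀP_{k+1}D is positive definite, so all gains K_k are well defined. -/
open Matrix

/-- `riccatiSeq A B C G Q R j` is the matrix `P_{N-j}` of the backward constrained
Riccati recursion, i.e. the recursion indexed by the number of steps to go:
`riccatiSeq 0 = P_N = Q` and `riccatiSeq (j+1)` is the constrained Riccati update of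
`riccatiSeq j`. -/
noncomputable def riccatiSeq {n m p : ℕ}
    (A : Matrix (Fin n) (Fin n) ℝ) (B : Matrix (Fin n) (Fin m) ℝ)
    (C : Matrix (Fin n) (Fin p) ℝ) (G : Matrix (Fin p) (Fin n) ℝ)
    (Q : Matrix (Fin n) (Fin n) ℝ) (R : Matrix (Fin m) (Fin m) ℝ) :
    ℕ → Matrix (Fin n) (Fin n) ℝ
  | 0 => Q
  | j + 1 =>
      let M : Matrix (Fin n) (Fin n) ℝ := 1 - C * (G * C)⁻¹ * G
      let D : Matrix (Fin n) (Fin m) ℝ := B - C * (G * C)⁻¹ * (G * B)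
      let P := riccatiSeq A B C G Q R j
      let K := (R + Dᵀ * P * D)⁻¹ * (Dᵀ * P * M * A)
      let L := (G * C)⁻¹ * (G * (A - B * K))
      let Abar := A - B * K - C * L
      Q + Kᵀ * R * K + Abarᵀ * P * Abar


lemma transpose_mul_mul_psd {a b : ℕ} {A : Matrix (Fin a) (Fin a) ℝ}
    (hA : A.PosSemidef) (B : Matrix (Fin a) (Fin b) ℝ) :
    (Bᵀ * A * B).PosSemidef := by
  simpa [conjTranspose_eq_transpose_of_trivial] using hA.conjTranspose_mul_mul_same B

lemma riccatiSeq_aux {n m p : ℕ}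
    (A : Matrix (Fin n) (Fin n) ℝ) (B : Matrix (Fin n) (Fin m) ℝ)
    (C : Matrix (Fin n) (Fin p) ℝ) (G : Matrix (Fin p) (Fin n) ℝ)
    (Q : Matrix (Fin n) (Fin n) ℝ) (hQ : Q.PosSemidef)
    (R : Matrix (Fin m) (Fin m) ℝ) (hR : R.PosDef) :
    ∀ j, (riccatiSeq A B C G Q R j).PosSemidef := by
  intro j
  induction j with
  | zero => exact hQ
  | succ j ih =>
      show (Q + _ + _).PosSemidef
      exact (hQ.add (transpose_mul_mul_psd hR.posSemidef _)).add
        (transpose_mul_mul_psd ih _)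

/-- Every matrix `P_k = riccatiSeq (N - k)` produced by the backward constrained
Riccati recursion is symmetric positive semidefinite, and every `R + Dᵀ P_{k+1} D`
is positive definite, so all gains `K_k` are well defined. -/
theorem riccati_recursion_posSemidef {n m p N : ℕ} (hN : 1 ≤ N)
    (A : Matrix (Fin n) (Fin n) ℝ) (B : Matrix (Fin n) (Fin m) ℝ)
    (C : Matrix (Fin n) (Fin p) ℝ) (G : Matrix (Fin p) (Fin n) ℝ)
    (hGC : IsUnit (G * C))
    (M : Matrix (Fin n) (Fin n) ℝ)
    (hM : M = 1 - C * (G * C)⁻¹ * G)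
    (D : Matrix (Fin n) (Fin m) ℝ)
    (hD : D = B - C * (G * C)⁻¹ * (G * B))
    (Q : Matrix (Fin n) (Fin n) ℝ) (hQ : Q.PosSemidef)
    (R : Matrix (Fin m) (Fin m) ℝ) (hR : R.PosDef) :
    (∀ k ≤ N, (riccatiSeq A B C G Q R (N - k)).PosSemidef) ∧
      (∀ k < N, (R + Dᵀ * riccatiSeq A B C G Q R (N - (k + 1)) * D).PosDef) := by
  refine ⟨fun k _ => riccatiSeq_aux A B C G Q hQ R hR _, fun k _ => ?_⟩
  exact hR.add_posSemidef
    (transpose_mul_mul_psd (riccatiSeq_aux A B C G Q hQ R hR (N - (k+1))) D)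
end

section
/- Finite-horizon constrained LQR optimality: for every initial state z₀ ∈ ℝⁿ and every control sequence u₀, …, u_{N−1} ∈ ℝᵐ, with states generated by z_{k+1} = M(Az_k + Bu_k), the total cost ½ z_NᵀQz_N + ½ Σ_{k=0}^{N−1} (z_kᵀQz_k + u_kᵀRu_k) is at least ½ z₀ᵀP₀z₀, and equality holds if and only if u_k = −K_k z_k for all k = 0, …, N−1; in particular the feedback policy u_k = −K_k z_k is optimal and achieves cost ½ z₀ᵀP₀z₀. -/
open Matrix

/-- The feedback gain `K_k` of the backward constrained Riccati recursion, computed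
from `P_{k+1} = riccatiSeq (N - (k+1))`. -/
noncomputable def riccatiGain {n m p : ℕ} (N : ℕ)
    (A : Matrix (Fin n) (Fin n) ℝ) (B : Matrix (Fin n) (Fin m) ℝ)
    (C : Matrix (Fin n) (Fin p) ℝ) (G : Matrix (Fin p) (Fin n) ℝ)
    (Q : Matrix (Fin n) (Fin n) ℝ) (R : Matrix (Fin m) (Fin m) ℝ) (k : ℕ) :
    Matrix (Fin m) (Fin n) ℝ :=
  let M : Matrix (Fin n) (Fin n) ℝ := 1 - C * (G * C)⁻¹ * G
  let D : Matrix (Fin n) (Fin m) ℝ := B - C * (G * C)⁻¹ * (G * B)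
  let P := riccatiSeq A B C G Q R (N - (k + 1))
  (R + Dᵀ * P * D)⁻¹ * (Dᵀ * P * M * A)


/-!
Since `D = M B` and `Ā_k = M A - D K_k`, the constrained problem is an ordinary LQR problem for
the dynamics `z ↦ (M A) z + (M B) u`. For such a problem, completing the square in `u` gives,
for every symmetric `P` with `S = R + DᵀPD` invertible,
`zᵀQz + uᵀRu + z'ᵀPz' = zᵀP⁺z + (u + Kz)ᵀS(u + Kz)`, where `z'` is the next state and `P⁺` the
Riccati update of `P`. Summing along a trajectory, the terms `z_kᵀP_kz_k` telescope, so the cost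
equals `z₀ᵀP₀z₀` plus a sum of the quadratic forms `S_k` at `u_k + K_k z_k`. All `P_k` are
positive semidefinite, so all `S_k` are positive definite, and that sum is nonnegative and
vanishes exactly on the feedback policy.
-/
namespace Matrix

variable {α ι κ : Type*} [Fintype ι]

lemma dotProduct_transpose_mul_mul_mulVec_s17 [CommRing α] [Fintype κ] (A : Matrix κ ι α)
    (B : Matrix κ κ α) (x : ι → α) :
    x ⬝ᵥ (Aᵀ * B * A) *ᵥ x = (A *ᵥ x) ⬝ᵥ B *ᵥ (A *ᵥ x) := by
  rw [← mulVec_mulVec, ← mulVec_mulVec, dotProduct_transpose_mulVec, dotProduct_comm]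

lemma IsSymm.dotProduct_mulVec_comm_s17 [CommRing α] {S : Matrix ι ι α} (hS : S.IsSymm)
    (x y : ι → α) : x ⬝ᵥ S *ᵥ y = y ⬝ᵥ S *ᵥ x := by
  rw [← dotProduct_transpose_mulVec, hS.eq]

lemma PosDef.star_dotProduct_mulVec_eq_zero_iff [Ring α] [PartialOrder α] [StarRing α]
    {M : Matrix ι ι α} (hM : M.PosDef) (x : ι → α) : star x ⬝ᵥ M *ᵥ x = 0 ↔ x = 0 :=
  ⟨fun h => by_contra fun hx => (hM.dotProduct_mulVec_pos hx).ne' h, by rintro rfl; simp⟩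

lemma one_sub_mul_mul_mul {m n o p : Type*} [Fintype m] [Fintype n] [Fintype o] [DecidableEq m]
    [Ring α] (C : Matrix m n α) (Y : Matrix n o α) (G : Matrix o m α) (X : Matrix m p α) :
    (1 - C * Y * G) * X = X - C * Y * (G * X) := by
  rw [Matrix.sub_mul, Matrix.one_mul, Matrix.mul_assoc _ G]

end Matrix

namespace LQR

open Finset

variable {𝕜 ι κ : Type*} [Fintype ι] [Fintype κ]

noncomputable section CommRing

variable [CommRing 𝕜] [DecidableEq κ]
  (F : Matrix ι ι 𝕜) (E : Matrix ι κ 𝕜) (Q : Matrix ι ι 𝕜) (R : Matrix κ κ 𝕜) (P : Matrix ι ι 𝕜)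

def hessian : Matrix κ κ 𝕜 := R + Eᵀ * P * E

def gain : Matrix κ ι 𝕜 := (hessian E R P)⁻¹ * (Eᵀ * P * F)

def riccatiStep : Matrix ι ι 𝕜 :=
  Q + (gain F E R P)ᵀ * R * gain F E R P +
    (F - E * gain F E R P)ᵀ * P * (F - E * gain F E R P)

-- Indexed by the number of steps to go, like `riccatiSeq`.
def valueMatrix (j : ℕ) : Matrix ι ι 𝕜 := (riccatiStep F E Q R)^[j] Q

def cost (z : ℕ → ι → 𝕜) (u : ℕ → κ → 𝕜) (N : ℕ) : 𝕜 :=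
  z N ⬝ᵥ Q *ᵥ z N + ∑ k ∈ range N, (z k ⬝ᵥ Q *ᵥ z k + u k ⬝ᵥ R *ᵥ u k)

variable {F E Q R P}

lemma transpose_mul_mul_sub_mul_gain (hS : IsUnit (hessian E R P).det) :
    Eᵀ * P * (F - E * gain F E R P) = R * gain F E R P := by
  have hSK : hessian E R P * gain F E R P = Eᵀ * P * F := by
    rw [gain, ← Matrix.mul_assoc, mul_nonsing_inv _ hS, Matrix.one_mul]
  rw [Matrix.mul_sub, ← hSK, hessian, Matrix.add_mul, Matrix.mul_assoc (Eᵀ * P)]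
  abel

theorem stageCost_add_value_eq (hP : P.IsSymm) (hR : R.IsSymm)
    (hS : IsUnit (hessian E R P).det) (z : ι → 𝕜) (u : κ → 𝕜) :
    z ⬝ᵥ Q *ᵥ z + u ⬝ᵥ R *ᵥ u + (F *ᵥ z + E *ᵥ u) ⬝ᵥ P *ᵥ (F *ᵥ z + E *ᵥ u) =
      z ⬝ᵥ riccatiStep F E Q R P *ᵥ z +
        (u + gain F E R P *ᵥ z) ⬝ᵥ hessian E R P *ᵥ (u + gain F E R P *ᵥ z) := by
  rw [riccatiStep, hessian]
  set K := gain F E R P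
  set v := u + K *ᵥ z
  set x := (F - E * K) *ᵥ z
  have hnext : F *ᵥ z + E *ᵥ u = x + E *ᵥ v := by
    simp only [x, v, sub_mulVec, mulVec_add, ← mulVec_mulVec]
    abel
  have hcross : (E *ᵥ v) ⬝ᵥ P *ᵥ x = v ⬝ᵥ R *ᵥ (K *ᵥ z) :=
    calc (E *ᵥ v) ⬝ᵥ P *ᵥ x = v ⬝ᵥ Eᵀ *ᵥ (P *ᵥ x) := by
          rw [dotProduct_transpose_mulVec, dotProduct_comm]
      _ = v ⬝ᵥ (Eᵀ * P * (F - E * K)) *ᵥ z := by simp only [x, mulVec_mulVec, Matrix.mul_assoc]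
      _ = v ⬝ᵥ R *ᵥ (K *ᵥ z) := by rw [transpose_mul_mul_sub_mul_gain hS, mulVec_mulVec]
  have hu : u = v - K *ᵥ z := by simp only [v, add_sub_cancel_right]
  rw [hnext, hu, add_mulVec, add_mulVec, add_mulVec, dotProduct_add, dotProduct_add, dotProduct_add,
    dotProduct_transpose_mul_mul_mulVec_s17, dotProduct_transpose_mul_mul_mulVec_s17,
    dotProduct_transpose_mul_mul_mulVec_s17]
  simp only [mulVec_add, mulVec_sub, dotProduct_add, dotProduct_sub, add_dotProduct,
    sub_dotProduct, hP.dotProduct_mulVec_comm_s17 x, hR.dotProduct_mulVec_comm_s17 (K *ᵥ z), hcross]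
  ring

end CommRing

section Real

variable [DecidableEq κ]
  {F : Matrix ι ι ℝ} {E : Matrix ι κ ℝ} {Q P : Matrix ι ι ℝ} {R : Matrix κ κ ℝ}

lemma valueMatrix_succ (j : ℕ) :
    valueMatrix F E Q R (j + 1) = riccatiStep F E Q R (valueMatrix F E Q R j) :=
  Function.iterate_succ_apply' ..

omit [DecidableEq κ] in
lemma posDef_hessian (hR : R.PosDef) (hP : P.PosSemidef) : (hessian E R P).PosDef := by
  have h := hP.conjTranspose_mul_mul_same E
  rw [conjTranspose_eq_transpose_of_trivial] at h
  exact hR.add_posSemidef h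

lemma posSemidef_riccatiStep (hQ : Q.PosSemidef) (hR : R.PosSemidef) (hP : P.PosSemidef) :
    (riccatiStep F E Q R P).PosSemidef := by
  have hK := hR.conjTranspose_mul_mul_same (gain F E R P)
  have hF := hP.conjTranspose_mul_mul_same (F - E * gain F E R P)
  rw [conjTranspose_eq_transpose_of_trivial] at hK hF
  exact (hQ.add hK).add hF

lemma posSemidef_valueMatrix (hQ : Q.PosSemidef) (hR : R.PosSemidef) (j : ℕ) :
    (valueMatrix F E Q R j).PosSemidef := by
  induction j with
  | zero => exact hQ
  | succ j ih => rw [valueMatrix_succ]; exact posSemidef_riccatiStep hQ hR ih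

lemma posDef_hessian_valueMatrix (hQ : Q.PosSemidef) (hR : R.PosDef) (j : ℕ) :
    (hessian E R (valueMatrix F E Q R j)).PosDef :=
  posDef_hessian hR (posSemidef_valueMatrix hQ hR.posSemidef j)

theorem cost_eq_value_add_sum (hQ : Q.PosSemidef) (hR : R.PosDef) {N : ℕ}
    {z : ℕ → ι → ℝ} {u : ℕ → κ → ℝ} (hz : ∀ k < N, z (k + 1) = F *ᵥ z k + E *ᵥ u k) :
    cost Q R z u N = z 0 ⬝ᵥ valueMatrix F E Q R N *ᵥ z 0 +
      ∑ k ∈ range N, (u k + gain F E R (valueMatrix F E Q R (N - (k + 1))) *ᵥ z k) ⬝ᵥ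
        hessian E R (valueMatrix F E Q R (N - (k + 1))) *ᵥ
          (u k + gain F E R (valueMatrix F E Q R (N - (k + 1))) *ᵥ z k) := by
  set V : ℕ → ℝ := fun k => z k ⬝ᵥ valueMatrix F E Q R (N - k) *ᵥ z k
  set square : ℕ → ℝ := fun k =>
    (u k + gain F E R (valueMatrix F E Q R (N - (k + 1))) *ᵥ z k) ⬝ᵥ
      hessian E R (valueMatrix F E Q R (N - (k + 1))) *ᵥ
        (u k + gain F E R (valueMatrix F E Q R (N - (k + 1))) *ᵥ z k)
  have hstep : ∀ k ∈ range N,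
      z k ⬝ᵥ Q *ᵥ z k + u k ⬝ᵥ R *ᵥ u k = V k - V (k + 1) + square k := by
    intro k hk
    have hk : k < N := mem_range.mp hk
    have hP := posSemidef_valueMatrix (F := F) (E := E) hQ hR.posSemidef (N - (k + 1))
    have hS := (isUnit_iff_isUnit_det _).mp (posDef_hessian_valueMatrix (F := F) (E := E) hQ hR
      (N - (k + 1))).isUnit
    have hsq := stageCost_add_value_eq (F := F) (Q := Q) (isHermitian_iff_isSymm.mp hP.1)
      (isHermitian_iff_isSymm.mp hR.1) hS (z k) (u k)
    rw [← hz k hk, ← valueMatrix_succ, show N - (k + 1) + 1 = N - k by omega] at hsq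
    simp only [V, square]
    linarith
  rw [cost, sum_congr rfl hstep, sum_add_distrib, sum_range_sub']
  simp only [V, Nat.sub_zero, Nat.sub_self, valueMatrix, Function.iterate_zero_apply]
  ring

theorem value_le_cost (hQ : Q.PosSemidef) (hR : R.PosDef) {N : ℕ}
    {z : ℕ → ι → ℝ} {u : ℕ → κ → ℝ} (hz : ∀ k < N, z (k + 1) = F *ᵥ z k + E *ᵥ u k) :
    z 0 ⬝ᵥ valueMatrix F E Q R N *ᵥ z 0 ≤ cost Q R z u N := by
  rw [cost_eq_value_add_sum hQ hR hz]
  refine le_add_of_nonneg_right (sum_nonneg fun k _ => ?_)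
  simpa only [star_trivial] using
    (posDef_hessian_valueMatrix hQ hR (N - (k + 1))).posSemidef.dotProduct_mulVec_nonneg _

theorem cost_eq_value_iff (hQ : Q.PosSemidef) (hR : R.PosDef) {N : ℕ}
    {z : ℕ → ι → ℝ} {u : ℕ → κ → ℝ} (hz : ∀ k < N, z (k + 1) = F *ᵥ z k + E *ᵥ u k) :
    cost Q R z u N = z 0 ⬝ᵥ valueMatrix F E Q R N *ᵥ z 0 ↔
      ∀ k < N, u k = -(gain F E R (valueMatrix F E Q R (N - (k + 1))) *ᵥ z k) := by
  have hS (j : ℕ) : (hessian E R (valueMatrix F E Q R j)).PosDef :=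
    posDef_hessian_valueMatrix hQ hR j
  rw [cost_eq_value_add_sum hQ hR hz, add_eq_left, sum_eq_zero_iff_of_nonneg fun k _ => by
    simpa only [star_trivial] using (hS (N - (k + 1))).posSemidef.dotProduct_mulVec_nonneg _]
  refine forall_congr' fun k => ?_
  rw [mem_range]
  refine imp_congr_right fun _ => ?_
  rw [← add_eq_zero_iff_eq_neg, ← (hS (N - (k + 1))).star_dotProduct_mulVec_eq_zero_iff,
    star_trivial]

end Real

end LQR

section ConstrainedDynamics

variable {n m p : ℕ} (A : Matrix (Fin n) (Fin n) ℝ) (B : Matrix (Fin n) (Fin m) ℝ)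
  (C : Matrix (Fin n) (Fin p) ℝ) (G : Matrix (Fin p) (Fin n) ℝ)
  (Q : Matrix (Fin n) (Fin n) ℝ) (R : Matrix (Fin m) (Fin m) ℝ)

lemma riccatiSeq_eq_valueMatrix (j : ℕ) :
    riccatiSeq A B C G Q R j =
      LQR.valueMatrix ((1 - C * (G * C)⁻¹ * G) * A) ((1 - C * (G * C)⁻¹ * G) * B) Q R j := by
  induction j with
  | zero => rfl
  | succ j ih =>
    rw [LQR.valueMatrix_succ, ← ih, riccatiSeq]
    simp only [← one_sub_mul_mul_mul, ← Matrix.mul_assoc C (G * C)⁻¹]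
    set M := 1 - C * (G * C)⁻¹ * G
    simp only [LQR.riccatiStep, LQR.gain, LQR.hessian, Matrix.mul_sub M, Matrix.mul_assoc]

lemma riccatiGain_eq_gain (N k : ℕ) :
    riccatiGain N A B C G Q R k =
      LQR.gain ((1 - C * (G * C)⁻¹ * G) * A) ((1 - C * (G * C)⁻¹ * G) * B) R
        (LQR.valueMatrix ((1 - C * (G * C)⁻¹ * G) * A) ((1 - C * (G * C)⁻¹ * G) * B) Q R
          (N - (k + 1))) := by
  simp only [riccatiGain]
  rw [← one_sub_mul_mul_mul, riccatiSeq_eq_valueMatrix, LQR.gain, LQR.hessian,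
    Matrix.mul_assoc _ _ A]

end ConstrainedDynamics

theorem constrained_lqr_optimality_general {n m p N : ℕ}
    (A : Matrix (Fin n) (Fin n) ℝ) (B : Matrix (Fin n) (Fin m) ℝ)
    (C : Matrix (Fin n) (Fin p) ℝ) (G : Matrix (Fin p) (Fin n) ℝ)
    (M : Matrix (Fin n) (Fin n) ℝ)
    (hM : M = 1 - C * (G * C)⁻¹ * G)
    (Q : Matrix (Fin n) (Fin n) ℝ) (hQ : Q.PosSemidef)
    (R : Matrix (Fin m) (Fin m) ℝ) (hR : R.PosDef) :
    ∀ (z₀ : Fin n → ℝ) (u : ℕ → Fin m → ℝ) (z : ℕ → Fin n → ℝ),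
      z 0 = z₀ →
      (∀ k < N, z (k + 1) = M *ᵥ (A *ᵥ z k + B *ᵥ u k)) →
      ((1 / 2) * (z N ⬝ᵥ (Q *ᵥ z N)) +
          (1 / 2) * ∑ k ∈ Finset.range N, (z k ⬝ᵥ (Q *ᵥ z k) + u k ⬝ᵥ (R *ᵥ u k)) ≥
        (1 / 2) * (z₀ ⬝ᵥ (riccatiSeq A B C G Q R N *ᵥ z₀))) ∧
      ((1 / 2) * (z N ⬝ᵥ (Q *ᵥ z N)) +
          (1 / 2) * ∑ k ∈ Finset.range N, (z k ⬝ᵥ (Q *ᵥ z k) + u k ⬝ᵥ (R *ᵥ u k)) =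
        (1 / 2) * (z₀ ⬝ᵥ (riccatiSeq A B C G Q R N *ᵥ z₀)) ↔
          ∀ k < N, u k = -(riccatiGain N A B C G Q R k *ᵥ z k)) := by
  rintro _ u z rfl hz
  have hz' : ∀ k < N, z (k + 1) = (M * A) *ᵥ z k + (M * B) *ᵥ u k := fun k hk => by
    rw [hz k hk, mulVec_add, mulVec_mulVec, mulVec_mulVec]
  subst hM
  have hcost : (1 / 2) * (z N ⬝ᵥ (Q *ᵥ z N)) +
      (1 / 2) * ∑ k ∈ Finset.range N, (z k ⬝ᵥ (Q *ᵥ z k) + u k ⬝ᵥ (R *ᵥ u k)) =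
        (1 / 2) * LQR.cost Q R z u N := by
    rw [LQR.cost, mul_add]
  simp only [hcost, riccatiGain_eq_gain, riccatiSeq_eq_valueMatrix, ge_iff_le,
    mul_le_mul_iff_right₀ one_half_pos, mul_right_inj' one_half_pos.ne']
  exact ⟨LQR.value_le_cost hQ hR hz', LQR.cost_eq_value_iff hQ hR hz'⟩

/-- Finite-horizon constrained LQR optimality: for every initial state `z 0` and
every control sequence `u`, with states generated by `z (k+1) = M (A z k + B u k)`,
the total cost is at least `½ z₀ᵀ P₀ z₀` (where `P₀ = riccatiSeq N`), with equality
iff `u k = -K_k (z k)` for all `k < N`; in particular the feedback policy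
`u k = -K_k (z k)` is optimal and achieves cost `½ z₀ᵀ P₀ z₀`. -/
theorem constrained_lqr_optimality {n m p N : ℕ} (hN : 1 ≤ N)
    (A : Matrix (Fin n) (Fin n) ℝ) (B : Matrix (Fin n) (Fin m) ℝ)
    (C : Matrix (Fin n) (Fin p) ℝ) (G : Matrix (Fin p) (Fin n) ℝ)
    (hGC : IsUnit (G * C))
    (M : Matrix (Fin n) (Fin n) ℝ)
    (hM : M = 1 - C * (G * C)⁻¹ * G)
    (D : Matrix (Fin n) (Fin m) ℝ)
    (hD : D = B - C * (G * C)⁻¹ * (G * B))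
    (Q : Matrix (Fin n) (Fin n) ℝ) (hQ : Q.PosSemidef)
    (R : Matrix (Fin m) (Fin m) ℝ) (hR : R.PosDef) :
    ∀ (z₀ : Fin n → ℝ) (u : ℕ → Fin m → ℝ) (z : ℕ → Fin n → ℝ),
      z 0 = z₀ →
      (∀ k < N, z (k + 1) = M *ᵥ (A *ᵥ z k + B *ᵥ u k)) →
      ((1 / 2) * (z N ⬝ᵥ (Q *ᵥ z N)) +
          (1 / 2) * ∑ k ∈ Finset.range N, (z k ⬝ᵥ (Q *ᵥ z k) + u k ⬝ᵥ (R *ᵥ u k)) ≥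
        (1 / 2) * (z₀ ⬝ᵥ (riccatiSeq A B C G Q R N *ᵥ z₀))) ∧
      ((1 / 2) * (z N ⬝ᵥ (Q *ᵥ z N)) +
          (1 / 2) * ∑ k ∈ Finset.range N, (z k ⬝ᵥ (Q *ᵥ z k) + u k ⬝ᵥ (R *ᵥ u k)) =
        (1 / 2) * (z₀ ⬝ᵥ (riccatiSeq A B C G Q R N *ᵥ z₀)) ↔
          ∀ k < N, u k = -(riccatiGain N A B C G Q R k *ᵥ z k)) :=
  constrained_lqr_optimality_general A B C G M hM Q hQ R hR
end
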